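/- Let A ∈ ℂ^{m×n} with A ≠ 0, B ∈ ℂ^{p×q} and C ∈ ℂ^{m×q} be given. Then there exists an X̂ ∈ ℂ^{n×p} such that (C − AXB)(C − AXB)* ⪰ (C − AX̂B)(C − AX̂B)* holds for all X ∈ ℂ^{n×p} if and only if ℛ(CB*) ⊆ ℛ(A). -/

import Mathlib

/-!
Write `E = C - A X̂ B`. Since `C - A X B = E - W` with `W = A (X - X̂) B` ranging over a complex
subspace, `X̂` is Löwner-minimal iff `(E - W)(E - W)* ⪰ E E*` for all such `W`. Along a line
`s ↦ E - s W` this forces the quadratic forms of `W E*` to vanish, hence `W E* = 0`, and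
conversely `W E* = 0` makes the difference equal to `W W* ⪰ 0`. As `A ≠ 0`, `A Z B E* = 0` for
all `Z` amounts to `B E* = 0`, i.e. to the normal equation `A X̂ B B* = C B*`. This equation is
solvable iff `ℛ(C B*) ⊆ ℛ(A)`, using `ℛ(B) = ℛ(B B*)` to get a generalized inverse of `B B*`.
-/

open Matrix
open scoped ComplexOrder

namespace Matrix

section Semiring

variable {l m n k : Type*} [Fintype m] [Fintype n]

theorem exists_mul_eq_of_range_mulVecLin_le {R : Type*} [CommSemiring R]
    (A : Matrix l m R) (M : Matrix l n R)
    (h : LinearMap.range M.mulVecLin ≤ LinearMap.range A.mulVecLin) :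
    ∃ N : Matrix m n R, A * N = M := by
  rw [range_mulVecLin, Submodule.span_le] at h
  choose N hN using fun j => h ⟨j, rfl⟩
  refine ⟨(of N)ᵀ, ext fun i j => ?_⟩
  simpa [mul_apply, mulVec, dotProduct] using congrFun (hN j) i

theorem range_mulVecLin_mul_le {R : Type*} [CommSemiring R] (A : Matrix l m R)
    (N : Matrix m n R) :
    LinearMap.range (A * N).mulVecLin ≤ LinearMap.range A.mulVecLin := by
  rw [mulVecLin_mul]
  exact LinearMap.range_comp_le_range _ _

theorem star_dotProduct_mul_conjTranspose_mulVec {R : Type*} [NonUnitalSemiring R] [StarRing R]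
    (F G : Matrix m n R) (v : m → R) :
    star v ⬝ᵥ (F * Gᴴ) *ᵥ v = star (Fᴴ *ᵥ v) ⬝ᵥ Gᴴ *ᵥ v := by
  rw [← mulVec_mulVec, dotProduct_mulVec, star_mulVec, conjTranspose_conjTranspose]

theorem eq_zero_of_forall_mul_mul_eq_zero {R : Type*} [Semiring R] [NoZeroDivisors R]
    {A : Matrix l m R} (hA : A ≠ 0) {M : Matrix n k R} (h : ∀ Z : Matrix m n R, A * Z * M = 0) :
    M = 0 := by
  classical
  obtain ⟨i, j, hij⟩ : ∃ i j, A i j ≠ 0 := by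
    by_contra! h0
    exact hA (ext h0)
  ext a b
  simpa [mul_apply, single_apply, ite_and, hij] using congrFun₂ (h (single j a 1)) i b

end Semiring

section RCLike

variable {𝕜 : Type*} [RCLike 𝕜] {l m n k : Type*} [Fintype m] [Fintype n]

theorem range_mulVecLin_self_mul_conjTranspose (B : Matrix m n 𝕜) :
    LinearMap.range (B * Bᴴ).mulVecLin = LinearMap.range B.mulVecLin :=
  Submodule.eq_of_le_of_finrank_eq (range_mulVecLin_mul_le _ _) (rank_self_mul_conjTranspose B)

/-- If `B = B Bᴴ W`, then `W Wᴴ` is a generalized inverse of `B Bᴴ`. -/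
theorem exists_conjTranspose_mul_mul_self_mul_conjTranspose (B : Matrix m n 𝕜) :
    ∃ H : Matrix m m 𝕜, Bᴴ * H * (B * Bᴴ) = Bᴴ := by
  obtain ⟨W, hW⟩ := exists_mul_eq_of_range_mulVecLin_le (B * Bᴴ) B
    (range_mulVecLin_self_mul_conjTranspose B).ge
  have hW' : Wᴴ * (B * Bᴴ) = Bᴴ := by
    simpa [Matrix.mul_assoc] using congrArg conjTranspose hW
  refine ⟨W * Wᴴ, ?_⟩
  calc Bᴴ * (W * Wᴴ) * (B * Bᴴ) = Wᴴ * (B * Bᴴ * W) * (Wᴴ * (B * Bᴴ)) := by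
        nth_rewrite 1 [← hW']; simp only [Matrix.mul_assoc]
    _ = Bᴴ := by rw [hW, hW', Matrix.mul_assoc, hW']

theorem exists_mul_mul_self_mul_conjTranspose_eq_iff [Fintype k]
    (A : Matrix l m 𝕜) (B : Matrix n k 𝕜) (C : Matrix l k 𝕜) :
    (∃ X : Matrix m n 𝕜, A * X * (B * Bᴴ) = C * Bᴴ) ↔
      LinearMap.range (C * Bᴴ).mulVecLin ≤ LinearMap.range A.mulVecLin := by
  constructor
  · rintro ⟨X, hX⟩
    rw [← hX, Matrix.mul_assoc]
    exact range_mulVecLin_mul_le _ _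
  · intro h
    obtain ⟨N, hN⟩ := exists_mul_eq_of_range_mulVecLin_le A _ h
    obtain ⟨H, hH⟩ := exists_conjTranspose_mul_mul_self_mul_conjTranspose B
    refine ⟨N * H, ?_⟩
    calc A * (N * H) * (B * Bᴴ) = C * (Bᴴ * H * (B * Bᴴ)) := by
          simp only [← Matrix.mul_assoc, hN]
      _ = C * Bᴴ := by rw [hH]

theorem posSemidef_sub_mul_conjTranspose_sub (E W : Matrix m n 𝕜) (h : W * Eᴴ = 0) :
    ((E - W) * (E - W)ᴴ - E * Eᴴ).PosSemidef := by
  have h' : E * Wᴴ = 0 := by simpa using congrArg conjTranspose h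
  convert posSemidef_self_mul_conjTranspose W using 1
  simp only [conjTranspose_sub, Matrix.sub_mul, Matrix.mul_sub, h, h']
  abel

/-- Along `s = t ⟪y, x⟫` with `t` real the hypothesis is a real quadratic inequality in `t`
with constant term `0`, so its discriminant `4 |⟪y, x⟫|⁴` is nonpositive. -/
theorem star_dotProduct_eq_zero_of_forall_le {x y : n → 𝕜}
    (h : ∀ s : 𝕜, star x ⬝ᵥ x ≤ star (x - s • y) ⬝ᵥ (x - s • y)) : star y ⬝ᵥ x = 0 := by
  set c := star y ⬝ᵥ x
  have hexpand (t : ℝ) : star (x - (t * c) • y) ⬝ᵥ (x - (t * c) • y) =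
      star x ⬝ᵥ x + ((‖c‖ ^ 2 * t ^ 2 : ℝ) : 𝕜) * (star y ⬝ᵥ y) - ((2 * ‖c‖ ^ 2 * t : ℝ) : 𝕜) := by
    simp only [star_sub, star_smul, sub_dotProduct, dotProduct_sub, smul_dotProduct,
      dotProduct_smul, smul_eq_mul, star_dotProduct x y, star_mul', RCLike.star_def,
      RCLike.conj_ofReal]
    push_cast
    linear_combination (t ^ 2 * (star y ⬝ᵥ y) - 2 * t : 𝕜) * RCLike.mul_conj c
  have hquad (t : ℝ) :
      0 ≤ (‖c‖ ^ 2 * RCLike.re (star y ⬝ᵥ y)) * (t * t) + (-2 * ‖c‖ ^ 2) * t + 0 := by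
    have := (RCLike.le_iff_re_im.mp (h (t * c))).1
    rw [hexpand, map_sub, map_add, RCLike.re_ofReal_mul, RCLike.ofReal_re] at this
    linarith
  simpa [discrim] using discrim_le_zero hquad

end RCLike

section Complex

variable {m n : Type*} [Fintype m] [Fintype n]

theorem eq_zero_of_forall_star_dotProduct_mulVec_eq_zero {M : Matrix n n ℂ}
    (h : ∀ v, star v ⬝ᵥ M *ᵥ v = 0) : M = 0 := by
  classical
  rw [← map_eq_zero_iff _ toEuclideanLin.injective, ← inner_map_self_eq_zero]
  intro x
  rw [EuclideanSpace.inner_eq_star_dotProduct, dotProduct_star, dotProduct_comm]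
  simp [h]

theorem mul_conjTranspose_eq_zero_of_forall_posSemidef (E W : Matrix m n ℂ)
    (h : ∀ s : ℂ, ((E - s • W) * (E - s • W)ᴴ - E * Eᴴ).PosSemidef) : W * Eᴴ = 0 := by
  refine eq_zero_of_forall_star_dotProduct_mulVec_eq_zero fun v => ?_
  rw [star_dotProduct_mul_conjTranspose_mulVec]
  refine star_dotProduct_eq_zero_of_forall_le fun s => ?_
  have := (h (star s)).dotProduct_mulVec_nonneg v
  rw [sub_mulVec, dotProduct_sub, sub_nonneg, star_dotProduct_mul_conjTranspose_mulVec,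
    star_dotProduct_mul_conjTranspose_mulVec] at this
  simpa [sub_mulVec, smul_mulVec] using this

end Complex

end Matrix

section LownerMinimum

variable {l m n k : Type*} [Fintype l] [Fintype m] [Fintype n] [Fintype k]

theorem posSemidef_of_mul_mul_self_mul_conjTranspose_eq {𝕜 : Type*} [RCLike 𝕜]
    {A : Matrix l m 𝕜} {B : Matrix n k 𝕜} {C : Matrix l k 𝕜} {Xh : Matrix m n 𝕜}
    (h : A * Xh * (B * Bᴴ) = C * Bᴴ) (X : Matrix m n 𝕜) :
    ((C - A * X * B) * (C - A * X * B)ᴴ - (C - A * Xh * B) * (C - A * Xh * B)ᴴ).PosSemidef := by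
  have hBE : B * (C - A * Xh * B)ᴴ = 0 := by
    rw [← conjTranspose_conjTranspose B, ← conjTranspose_mul, Matrix.sub_mul, ← h]
    simp [Matrix.mul_assoc]
  have hsplit : C - A * X * B = (C - A * Xh * B) - A * (X - Xh) * B := by
    rw [Matrix.mul_sub, Matrix.sub_mul]
    abel
  rw [hsplit]
  exact posSemidef_sub_mul_conjTranspose_sub _ _ (by rw [Matrix.mul_assoc, hBE, Matrix.mul_zero])

theorem mul_mul_self_mul_conjTranspose_eq_of_forall_posSemidef
    {A : Matrix l m ℂ} (hA : A ≠ 0) {B : Matrix n k ℂ} {C : Matrix l k ℂ} {Xh : Matrix m n ℂ}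
    (h : ∀ X : Matrix m n ℂ,
      ((C - A * X * B) * (C - A * X * B)ᴴ - (C - A * Xh * B) * (C - A * Xh * B)ᴴ).PosSemidef) :
    A * Xh * (B * Bᴴ) = C * Bᴴ := by
  have hBE : B * (C - A * Xh * B)ᴴ = 0 := by
    refine eq_zero_of_forall_mul_mul_eq_zero hA fun Z => ?_
    rw [← Matrix.mul_assoc]
    refine mul_conjTranspose_eq_zero_of_forall_posSemidef _ _ fun s => ?_
    have hsplit : C - A * (Xh + s • Z) * B = (C - A * Xh * B) - s • (A * Z * B) := by
      rw [Matrix.mul_add, Matrix.add_mul, Matrix.mul_smul, Matrix.smul_mul]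
      abel
    simpa only [hsplit] using h (Xh + s • Z)
  have := congrArg conjTranspose hBE
  simp only [conjTranspose_mul, conjTranspose_conjTranspose, conjTranspose_zero, Matrix.sub_mul,
    sub_eq_zero] at this
  simp only [this, Matrix.mul_assoc]

theorem forall_posSemidef_sub_iff_mul_mul_self_mul_conjTranspose_eq
    {A : Matrix l m ℂ} (hA : A ≠ 0) {B : Matrix n k ℂ} {C : Matrix l k ℂ} {Xh : Matrix m n ℂ} :
    (∀ X : Matrix m n ℂ,
      ((C - A * X * B) * (C - A * X * B)ᴴ - (C - A * Xh * B) * (C - A * Xh * B)ᴴ).PosSemidef) ↔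
      A * Xh * (B * Bᴴ) = C * Bᴴ :=
  ⟨mul_mul_self_mul_conjTranspose_eq_of_forall_posSemidef hA,
    posSemidef_of_mul_mul_self_mul_conjTranspose_eq⟩

end LownerMinimum

theorem stmt18 {m n p q : ℕ}
    (A : Matrix (Fin m) (Fin n) ℂ) (B : Matrix (Fin p) (Fin q) ℂ)
    (C : Matrix (Fin m) (Fin q) ℂ) (hA : A ≠ 0) :
    (∃ Xhat : Matrix (Fin n) (Fin p) ℂ,
        ∀ X : Matrix (Fin n) (Fin p) ℂ,
          ((C - A * X * B) * (C - A * X * B)ᴴ -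
            (C - A * Xhat * B) * (C - A * Xhat * B)ᴴ).PosSemidef) ↔
      LinearMap.range (C * Bᴴ).mulVecLin ≤ LinearMap.range A.mulVecLin :=
  (exists_congr fun _ => forall_posSemidef_sub_iff_mul_mul_self_mul_conjTranspose_eq hA).trans
    (exists_mul_mul_self_mul_conjTranspose_eq_iff A B C)
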